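/- arXiv:1511.09467 — 5 statements merged into one kernel-verified Lean document; each statement's English description precedes it below -/
import Mathlib

section
/- Let k ≥ 1 be an integer, let G = ℤ/2ℤ × ℤ/2ℤ × ℤ/(2k+1)ℤ (written additively), let S = {(1,0,0), (0,1,0), (1,1,1)}, and let ι be the inversion (negation) automorphism of G. Then the generalized Cayley graph GC(G, S, ι) is not vertex-transitive: it is not the case that for every pair of vertices u, v there is a graph automorphism of GC(G, S, ι) mapping u to v. -/
/-!
The neighbours of `0` in `GC(G, S, ι)` are the elements of `S`, and no sum of two elements of `S`
lies in `S`, so the neighbourhood of `0` is independent. The vertex `(1, 1, -h)`, with `h = k + 1`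
the inverse of `2` modulo `2k+1`, lies on the triangle `(1, 1, -h)`, `(0, 1, h)`, `(1, 0, h)`.
A graph automorphism carries triangles through `u` to triangles through its image, so it cannot
send `(1, 1, -h)` to `0`.
-/

/-- The generalized Cayley graph `GC(G, S, α)` for an additively written group. -/
def GCadd {G : Type*} [AddGroup G] (α : G ≃+ G) (S : Set G)
    (h1 : ∀ x : G, α (α x) = x)
    (h2 : ∀ x : G, α (-x) + x ∉ S)
    (h3 : ⇑α '' (-S) = S) : SimpleGraph G where
  Adj x y := α (-x) + y ∈ S
  symm := by
    constructor
    intro x y hxy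
    have hmem : -(α (-x) + y) ∈ -S := by simpa [Set.mem_neg] using hxy
    have himg : α (-(α (-x) + y)) ∈ ⇑α '' (-S) := Set.mem_image_of_mem _ hmem
    rw [h3] at himg
    simpa [neg_add_rev, map_add, map_neg, h1] using himg
  loopless := ⟨fun x hx => h2 x hx⟩

private lemma double_ne_one_mod_two : ∀ a : ZMod 2, a + a ≠ 1 := by decide

private lemma ten_h1 (k : ℕ) :
    ∀ x : ZMod 2 × ZMod 2 × ZMod (2 * k + 1),
      (AddEquiv.neg (ZMod 2 × ZMod 2 × ZMod (2 * k + 1)))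
        ((AddEquiv.neg (ZMod 2 × ZMod 2 × ZMod (2 * k + 1))) x) = x := by
  intro x; simp

private lemma ten_h2 (k : ℕ) (hk : 1 ≤ k) :
    ∀ x : ZMod 2 × ZMod 2 × ZMod (2 * k + 1),
      (AddEquiv.neg (ZMod 2 × ZMod 2 × ZMod (2 * k + 1))) (-x) + x ∉
        ({(1, 0, 0), (0, 1, 0), (1, 1, 1)} :
          Set (ZMod 2 × ZMod 2 × ZMod (2 * k + 1))) := by
  intro x hx
  have hx' : x + x ∈ ({(1, 0, 0), (0, 1, 0), (1, 1, 1)} :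
      Set (ZMod 2 × ZMod 2 × ZMod (2 * k + 1))) := by simpa using hx
  simp only [Set.mem_insert_iff, Set.mem_singleton_iff] at hx'
  rcases hx' with h | h | h
  · exact double_ne_one_mod_two x.1 (congrArg Prod.fst h)
  · exact double_ne_one_mod_two x.2.1 (congrArg (fun z => z.2.1) h)
  · exact double_ne_one_mod_two x.1 (congrArg Prod.fst h)

private lemma ten_h3 (k : ℕ) :
    ⇑(AddEquiv.neg (ZMod 2 × ZMod 2 × ZMod (2 * k + 1))) ''
        (-({(1, 0, 0), (0, 1, 0), (1, 1, 1)} :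
          Set (ZMod 2 × ZMod 2 × ZMod (2 * k + 1)))) =
      ({(1, 0, 0), (0, 1, 0), (1, 1, 1)} :
        Set (ZMod 2 × ZMod 2 × ZMod (2 * k + 1))) := by
  ext x
  simp only [Set.mem_image, Set.mem_neg, Set.mem_insert_iff, Set.mem_singleton_iff,
    AddEquiv.neg_apply]
  constructor
  · rintro ⟨y, hy, rfl⟩
    rcases hy with h | h | h <;> simp_all
  · intro hx
    exact ⟨-x, by simpa using hx, by simp⟩

namespace SimpleGraph

theorem Hom.isIndepSet_neighborSet_of_map {V W : Type*} {G : SimpleGraph V} {H : SimpleGraph W}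
    (f : G →g H) {v : V} (h : H.IsIndepSet (H.neighborSet (f v))) :
    G.IsIndepSet (G.neighborSet v) := by
  intro a ha b hb _ hab
  have hfab := f.map_adj hab
  exact h (f.map_adj ha) (f.map_adj hb) hfab.ne hfab

end SimpleGraph

open SimpleGraph

section NegCayley

variable {G : Type*} [AddCommGroup G] {S : Set G}
  {h1 : ∀ x : G, AddEquiv.neg G (AddEquiv.neg G x) = x}
  {h2 : ∀ x : G, AddEquiv.neg G (-x) + x ∉ S}
  {h3 : ⇑(AddEquiv.neg G) '' (-S) = S}

theorem GCadd_neg_adj {x y : G} : (GCadd (AddEquiv.neg G) S h1 h2 h3).Adj x y ↔ x + y ∈ S := by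
  simp [GCadd]

theorem GCadd_neg_isIndepSet_neighborSet_zero (hS : ∀ s ∈ S, ∀ t ∈ S, s + t ∉ S) :
    (GCadd (AddEquiv.neg G) S h1 h2 h3).IsIndepSet
      ((GCadd (AddEquiv.neg G) S h1 h2 h3).neighborSet 0) := by
  intro s hs t ht _ hst
  rw [mem_neighborSet, GCadd_neg_adj, zero_add] at hs ht
  exact hS s hs t ht (GCadd_neg_adj.mp hst)

theorem GCadd_neg_not_isIndepSet_neighborSet {x y z : G}
    (hxy : x + y ∈ S) (hxz : x + z ∈ S) (hyz : y + z ∈ S) :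
    ¬ (GCadd (AddEquiv.neg G) S h1 h2 h3).IsIndepSet
      ((GCadd (AddEquiv.neg G) S h1 h2 h3).neighborSet x) := by
  have hy : (GCadd (AddEquiv.neg G) S h1 h2 h3).Adj x y := GCadd_neg_adj.mpr hxy
  have hz : (GCadd (AddEquiv.neg G) S h1 h2 h3).Adj x z := GCadd_neg_adj.mpr hxz
  have hyz' : (GCadd (AddEquiv.neg G) S h1 h2 h3).Adj y z := GCadd_neg_adj.mpr hyz
  exact fun hind => hind hy hz hyz'.ne hyz'

end NegCayley

section ConnectionSet

variable (R : Type*) [Ring R]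

abbrev connectionSet : Set (ZMod 2 × ZMod 2 × R) :=
  {(1, 0, 0), (0, 1, 0), (1, 1, 1)}

theorem add_notMem_connectionSet [Nontrivial R] :
    ∀ s ∈ connectionSet R, ∀ t ∈ connectionSet R, s + t ∉ connectionSet R := by
  simp only [Set.mem_insert_iff, Set.mem_singleton_iff]
  rintro s (rfl | rfl | rfl) t (rfl | rfl | rfl) <;> simp [Prod.ext_iff]

variable {R}

theorem connectionSet_triangle {h : R} (hh : h + h = 1) :
    ((1, 1, -h) + (0, 1, h) : ZMod 2 × ZMod 2 × R) ∈ connectionSet R ∧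
      ((1, 1, -h) + (1, 0, h) : ZMod 2 × ZMod 2 × R) ∈ connectionSet R ∧
      ((0, 1, h) + (1, 0, h) : ZMod 2 × ZMod 2 × R) ∈ connectionSet R := by
  have two_eq_zero : (1 + 1 : ZMod 2) = 0 := rfl
  simp [hh, two_eq_zero]

end ConnectionSet

theorem ZMod.succ_add_succ_eq_one (k : ℕ) :
    ((k + 1 : ZMod (2 * k + 1)) + (k + 1 : ZMod (2 * k + 1))) = 1 := by
  have h := ZMod.natCast_self (2 * k + 1)
  push_cast at h
  linear_combination h

/-- For `k ≥ 1`, `G = ℤ/2ℤ × ℤ/2ℤ × ℤ/(2k+1)ℤ`, `S = {(1,0,0),(0,1,0),(1,1,1)}`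
and `ι` the negation automorphism, the generalized Cayley graph `GC(G, S, ι)` is not
vertex-transitive. -/
theorem stmt_10 (k : ℕ) (hk : 1 ≤ k) :
    ¬ ∀ u v : ZMod 2 × ZMod 2 × ZMod (2 * k + 1),
        ∃ e : GCadd (AddEquiv.neg (ZMod 2 × ZMod 2 × ZMod (2 * k + 1)))
              {(1, 0, 0), (0, 1, 0), (1, 1, 1)} (ten_h1 k) (ten_h2 k hk) (ten_h3 k) ≃g
            GCadd (AddEquiv.neg (ZMod 2 × ZMod 2 × ZMod (2 * k + 1)))
              {(1, 0, 0), (0, 1, 0), (1, 1, 1)} (ten_h1 k) (ten_h2 k hk) (ten_h3 k),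
          e u = v := by
  intro hvt
  have : Fact (1 < 2 * k + 1) := ⟨by omega⟩
  obtain ⟨hxy, hxz, hyz⟩ := connectionSet_triangle (ZMod.succ_add_succ_eq_one k)
  obtain ⟨e, he⟩ := hvt (1, 1, -(k + 1)) 0
  have hindep := GCadd_neg_isIndepSet_neighborSet_zero (h1 := ten_h1 k) (h2 := ten_h2 k hk)
    (h3 := ten_h3 k) (add_notMem_connectionSet _)
  rw [← he] at hindep
  exact GCadd_neg_not_isIndepSet_neighborSet hxy hxz hyz
    (e.toEmbedding.toHom.isIndepSet_neighborSet_of_map hindep)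
end

section
/- Let X = GC(G₁, S₁, α₁) and Y = GC(G₂, S₂, α₂) be generalized Cayley graphs, and let α be the automorphism of G₁ × G₂ defined by α(g₁, g₂) = (α₁(g₁), α₂(g₂)). Then α² = 1, the set S₁ × S₂ satisfies α((x)⁻¹)·x ∉ S₁ × S₂ for all x ∈ G₁ × G₂ and α((S₁ × S₂)⁻¹) = S₁ × S₂, and the generalized Cayley graph GC(G₁ × G₂, S₁ × S₂, α) is exactly the direct (tensor) product of X and Y: two vertices (x₁, y₁) and (x₂, y₂) are adjacent in GC(G₁ × G₂, S₁ × S₂, α) if and only if x₁ is adjacent to x₂ in X and y₁ is adjacent to y₂ in Y. -/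
/-- The generalized Cayley graph `GC(G, S, α)`. -/
def GC {G : Type*} [Group G] (α : G ≃* G) (S : Set G)
    (h1 : ∀ x : G, α (α x) = x)
    (h2 : ∀ x : G, α x⁻¹ * x ∉ S)
    (h3 : ⇑α '' S⁻¹ = S) : SimpleGraph G where
  Adj x y := α x⁻¹ * y ∈ S
  symm := by
    constructor
    intro x y hxy
    have hmem : (α x⁻¹ * y)⁻¹ ∈ S⁻¹ := by simpa [Set.mem_inv] using hxy
    have himg : α ((α x⁻¹ * y)⁻¹) ∈ ⇑α '' S⁻¹ := Set.mem_image_of_mem _ hmem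
    rw [h3] at himg
    simpa [mul_inv_rev, map_mul, map_inv, h1] using himg
  loopless := ⟨fun x hx => h2 x hx⟩

theorem MulEquiv.image_prodCongr_inv_prod {G₁ G₂ : Type*} [Group G₁] [Group G₂]
    (α₁ : G₁ ≃* G₁) (α₂ : G₂ ≃* G₂) (S₁ : Set G₁) (S₂ : Set G₂) :
    ⇑(α₁.prodCongr α₂) '' (S₁ ×ˢ S₂)⁻¹ = (α₁ '' S₁⁻¹) ×ˢ (α₂ '' S₂⁻¹) := by
  rw [Set.inv_prod]
  exact Set.prodMap_image_prod _ _ _ _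

/-- For generalized Cayley graphs `X = GC(G₁, S₁, α₁)` and
`Y = GC(G₂, S₂, α₂)`, the pair `(S₁ × S₂, α₁ × α₂)` satisfies the defining conditions of
a generalized Cayley graph on `G₁ × G₂`, and `GC(G₁ × G₂, S₁ × S₂, α₁ × α₂)` is exactly
the direct (tensor) product `X × Y`: `(x₁, y₁) ~ (x₂, y₂)` iff `x₁ ~ x₂` in `X` and
`y₁ ~ y₂` in `Y`. -/
theorem stmt_11 {G₁ G₂ : Type*} [Group G₁] [Group G₂]
    (α₁ : G₁ ≃* G₁) (S₁ : Set G₁)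
    (h11 : ∀ x : G₁, α₁ (α₁ x) = x)
    (h12 : ∀ x : G₁, α₁ x⁻¹ * x ∉ S₁)
    (h13 : ⇑α₁ '' S₁⁻¹ = S₁)
    (α₂ : G₂ ≃* G₂) (S₂ : Set G₂)
    (h21 : ∀ x : G₂, α₂ (α₂ x) = x)
    (h22 : ∀ x : G₂, α₂ x⁻¹ * x ∉ S₂)
    (h23 : ⇑α₂ '' S₂⁻¹ = S₂) :
    ∃ (h1 : ∀ x : G₁ × G₂, (α₁.prodCongr α₂) ((α₁.prodCongr α₂) x) = x)
      (h2 : ∀ x : G₁ × G₂, (α₁.prodCongr α₂) x⁻¹ * x ∉ S₁ ×ˢ S₂)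
      (h3 : ⇑(α₁.prodCongr α₂) '' (S₁ ×ˢ S₂)⁻¹ = S₁ ×ˢ S₂),
      ∀ a b : G₁ × G₂,
        (GC (α₁.prodCongr α₂) (S₁ ×ˢ S₂) h1 h2 h3).Adj a b ↔
          (GC α₁ S₁ h11 h12 h13).Adj a.1 b.1 ∧ (GC α₂ S₂ h21 h22 h23).Adj a.2 b.2 :=
  ⟨Function.Involutive.prodMap h11 h21,
    fun x hx => h12 x.1 hx.1,
    by rw [MulEquiv.image_prodCongr_inv_prod, h13, h23],
    -- adjacency in `GC` unfolds to membership in `S₁ ×ˢ S₂`, which is componentwise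
    fun _ _ => Iff.rfl⟩
end

section
/- Let p be a prime. Then every generalized Cayley graph on the dihedral group D_{2p} of order 2p is a Cayley graph; that is, for every subset S ⊆ D_{2p} and every automorphism α of D_{2p} with α² = 1 such that α(x⁻¹)·x ∉ S for all x and α(S⁻¹) = S, the graph GC(D_{2p}, S, α) is isomorphic to a Cayley graph Cay(H, T) for some group H and subset T with 1 ∉ T and T⁻¹ = T. -/
/-- The Cayley graph `Cay(H, T)`. -/
def Cay {H : Type*} [Group H] (T : Set H) (hT1 : (1 : H) ∉ T) (hT2 : T⁻¹ = T) :
    SimpleGraph H where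
  Adj x y := x⁻¹ * y ∈ T
  symm := by
    constructor
    intro x y hxy
    have : (x⁻¹ * y)⁻¹ ∈ T⁻¹ := by simpa [Set.mem_inv] using hxy
    rw [hT2] at this
    simpa [mul_inv_rev] using this
  loopless := ⟨fun x hx => hT1 (by simpa using hx)⟩

/-- A representation of the graph `X` as a Cayley graph: a group, together with a
connection set `T` with `1 ∉ T` and `T⁻¹ = T`, whose Cayley graph is isomorphic to `X`. -/
structure CayleyRepn {V : Type*} (X : SimpleGraph V) where
  carrier : Type
  [group : Group carrier]
  conn : Set carrier
  one_not_mem : (1 : carrier) ∉ conn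
  inv_eq : conn⁻¹ = conn
  iso : Nonempty (X ≃g Cay conn one_not_mem inv_eq)

/-- A graph is a Cayley graph if it is isomorphic to `Cay(H, T)` for some group `H` and
some subset `T ⊆ H` with `1 ∉ T` and `T⁻¹ = T`. -/
def IsCayleyGraph {V : Type*} (X : SimpleGraph V) : Prop := Nonempty (CayleyRepn X)

/-!
An involutive automorphism `α` of `D_{2p}` is either the identity, or an involution of the Klein
four group `D_4`, or (for `p` odd) conjugation by a reflection. In the first two cases
`α(x⁻¹) x S = S` for every `x`, and then `GC(G, S, α)` is literally `Cay(G, S)`. In the last case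
`S` consists of reflections only; left translation by the fixed reflection and right translations
by rotations are then graph automorphisms, and together they act regularly, as `ℤ₂ × ℤ_p`.
-/

theorem isCayleyGraph_of_equiv {V : Type*} {H : Type} [Group H] (X : SimpleGraph V) (e : H ≃ V)
    (he : ∀ h k, X.Adj (e h) (e k) ↔ X.Adj (e 1) (e (h⁻¹ * k))) : IsCayleyGraph X := by
  let T : Set H := {t | X.Adj (e 1) (e t)}
  have one_not_mem : (1 : H) ∉ T := X.loopless.irrefl _
  have inv_eq : T⁻¹ = T := by
    ext t
    simpa [T, X.adj_comm] using (he t 1).symm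
  refine ⟨⟨H, T, one_not_mem, inv_eq, ⟨⟨e.symm, fun {a b} => ?_⟩⟩⟩⟩
  simpa [Cay, T] using (he (e.symm a) (e.symm b)).symm

theorem IsKleinFour.mulEquiv_apply_eq_self {G : Type*} [Group G] [IsKleinFour G] (φ : G ≃* G)
    {u v : G} (hu : u ≠ 1) (hv : v ≠ 1) (huv : u ≠ v) (hφu : φ u = u) (hφv : φ v = v) (x : G) :
    φ x = x := by
  by_cases hx1 : x = 1
  · rw [hx1, map_one]
  by_cases hxu : x = u
  · rwa [hxu]
  by_cases hxv : x = v
  · rwa [hxv]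
  rw [IsKleinFour.eq_mul_of_ne_all hu hv huv hx1 hxu hxv, map_mul, hφu, hφv]

section GeneralizedCayley

variable {G : Type} [Group G] {α : G ≃* G} {S : Set G}

theorem map_inv_mem_iff_of_image_inv_eq (h1 : ∀ x : G, α (α x) = x) (h3 : ⇑α '' S⁻¹ = S)
    (z : G) : α z⁻¹ ∈ S ↔ z ∈ S := by
  conv_rhs => rw [← h3]
  constructor
  · intro hz
    exact ⟨α z, by simpa using hz, h1 z⟩
  · rintro ⟨t, ht, rfl⟩
    simpa [h1] using ht

open IsKleinFour in
/-- `S` avoids the subgroup `{1, w}` fixed by a nontrivial `α`, and `α` swaps the other two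
elements, which differ by `w`; hence `w * S = S`. -/
theorem IsKleinFour.map_inv_mul_self_mul_mem [IsKleinFour G] (h1 : ∀ x : G, α (α x) = x)
    (h2 : ∀ x : G, α x⁻¹ * x ∉ S) (h3 : ⇑α '' S⁻¹ = S) (x : G) {z : G} (hz : z ∈ S) :
    α x⁻¹ * x * z ∈ S := by
  set w := α x⁻¹ * x with hw_def
  by_cases hw : w = 1
  · rwa [hw, one_mul]
  have h1S : (1 : G) ∉ S := by simpa using h2 1
  have hwS : w ∉ S := h2 x
  have hαz : α z ∈ S := by
    simpa [inv_eq_self] using (map_inv_mem_iff_of_image_inv_eq h1 h3 z).2 hz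
  have hzw : z ≠ w := ne_of_mem_of_not_mem hz hwS
  by_cases hαzz : α z = z
  · have hαw : α w = w := by
      rw [hw_def, map_mul, h1, inv_eq_self, mul_comm_of_exponent_two exponent_two]
    have hαx := mulEquiv_apply_eq_self α hw (ne_of_mem_of_not_mem hz h1S) hzw.symm hαw hαzz x
    exact absurd (by rw [hw_def, inv_eq_self, hαx, mul_self]) hw
  · rwa [← eq_mul_of_ne_all hw (ne_of_mem_of_not_mem hz h1S) hzw.symm
      (ne_of_mem_of_not_mem hαz h1S) (ne_of_mem_of_not_mem hαz hwS) hαzz]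

variable (h1 : ∀ x : G, α (α x) = x) (h2 : ∀ x : G, α x⁻¹ * x ∉ S) (h3 : ⇑α '' S⁻¹ = S)

@[simp]
theorem GC_adj (x y : G) : (GC α S h1 h2 h3).Adj x y ↔ α x⁻¹ * y ∈ S :=
  Iff.rfl

theorem isCayleyGraph_GC_of_mul_mem_iff (hS : ∀ x z, α x⁻¹ * x * z ∈ S ↔ z ∈ S) :
    IsCayleyGraph (GC α S h1 h2 h3) :=
  isCayleyGraph_of_equiv _ (Equiv.refl G) fun x y => by
    simpa [mul_assoc] using hS x (x⁻¹ * y)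

/-- `A` acts on `GC(G, S, α)` by left and `B` by right translations; when `G = A * B` is an exact
factorization, `(a, b) ↦ a * b⁻¹` makes this action of `A × B` regular. -/
theorem isCayleyGraph_GC_of_isComplement' {A B : Subgroup G} (hAB : A.IsComplement' B)
    (hA : ∀ a ∈ A, α a = a) (hB : ∀ b ∈ B, ∀ z, α b * z * b⁻¹ ∈ S ↔ z ∈ S) :
    IsCayleyGraph (GC α S h1 h2 h3) := by
  let e : A × B ≃ G :=
    ((Equiv.refl A).prodCongr (Equiv.inv B)).trans (Equiv.ofBijective _ hAB)
  refine isCayleyGraph_of_equiv _ e fun ⟨a, b⟩ ⟨a', b'⟩ => ?_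
  have key := hB b b.2 ((a : G)⁻¹ * a' * (b' : G)⁻¹ * b)
  simpa [e, hA _ (A.inv_mem a.2), mul_assoc] using key

theorem isCayleyGraph_GC_of_isKleinFour [IsKleinFour G] : IsCayleyGraph (GC α S h1 h2 h3) := by
  refine isCayleyGraph_GC_of_mul_mem_iff h1 h2 h3 fun x z =>
    ⟨fun h => ?_, IsKleinFour.map_inv_mul_self_mul_mem h1 h2 h3 x⟩
  have h' := IsKleinFour.map_inv_mul_self_mul_mem h1 h2 h3 x h
  rwa [← mul_assoc, IsKleinFour.mul_self, one_mul] at h'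

end GeneralizedCayley

namespace DihedralGroup

variable {n : ℕ}

theorem exists_mulEquiv_apply_r (φ : DihedralGroup n ≃* DihedralGroup n)
    (h2 : (2 : ZMod n) ≠ 0) : ∃ a : ZMod n, ∀ i, φ (r i) = r (a * i) := by
  obtain ⟨a, ha⟩ : ∃ a, φ (r 1) = r a := by
    rcases hφ : φ (r 1) with a | b
    · exact ⟨a, rfl⟩
    · have h : r (2 : ZMod n) = r 0 := φ.injective <| by
        rw [← one_add_one_eq_two, ← r_mul_r, map_mul, hφ, sr_mul_sr, sub_self, r_zero, map_one]
      exact absurd (r.inj h) h2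
  refine ⟨a, fun i => ?_⟩
  rw [← ZMod.intCast_zmod_cast i, ← r_one_zpow, map_zpow, ha, r_zpow]

theorem exists_mulEquiv_apply_sr (φ : DihedralGroup n ≃* DihedralGroup n) {a : ZMod n}
    (ha : ∀ i, φ (r i) = r (a * i)) : ∃ b : ZMod n, ∀ i, φ (sr i) = sr (b + a * i) := by
  have hsr : ∀ i, φ (sr i) = φ (sr 0) * r (a * i) := fun i => by
    rw [← ha, ← map_mul, sr_mul_r, zero_add]
  obtain ⟨b, hb⟩ : ∃ b, φ (sr 0) = sr b := by
    rcases hφ : φ (sr 0) with t | b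
    · obtain ⟨x | x, hx⟩ := φ.surjective (sr 0)
      · simp [ha] at hx
      · rw [hsr, hφ, r_mul_r] at hx
        cases hx
    · exact ⟨b, rfl⟩
  exact ⟨b, fun i => by rw [hsr, hb, sr_mul_r]⟩

theorem mulEquiv_eq_id_or_apply_r_eq_neg {p : ℕ} [Fact p.Prime] (hp2 : p ≠ 2)
    (α : DihedralGroup p ≃* DihedralGroup p) (h1 : ∀ x, α (α x) = x) :
    (∀ x, α x = x) ∨ (∀ i, α (r i) = r (-i)) ∧ ∃ c, α (sr c) = sr c := by
  have h2 : (2 : ZMod p) ≠ 0 := Ring.two_ne_zero (by rwa [ZMod.ringChar_zmod_n])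
  obtain ⟨a, ha⟩ := exists_mulEquiv_apply_r α h2
  obtain ⟨b, hb⟩ := exists_mulEquiv_apply_sr α ha
  have haa : a * a = 1 := by simpa [ha] using h1 (r 1)
  rcases mul_self_eq_one_iff.mp haa with rfl | rfl
  · have hbb : 2 * b = 0 := by simpa [hb, two_mul] using h1 (sr 0)
    have hb0 : b = 0 := (mul_eq_zero.mp hbb).resolve_left h2
    left
    rintro (i | i) <;> simp [ha, hb, hb0]
  · right
    refine ⟨fun i => by simp [ha], b / 2, ?_⟩
    rw [hb]
    congr 1
    field_simp
    ring

end DihedralGroup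

open DihedralGroup Subgroup in
/-- `S` contains no rotation, as `r k = α (r (k / 2))⁻¹ * r (k / 2)`, so right translation by a
rotation, which fixes every reflection, is a graph automorphism; and `D_{2n} = ⟨sr c⟩ * ⟨r 1⟩`
is an exact factorization because `2` and `n` are coprime. -/
theorem isCayleyGraph_GC_dihedral_of_apply_r_eq_neg {n : ℕ} (hn : Odd n)
    {α : DihedralGroup n ≃* DihedralGroup n} {S : Set (DihedralGroup n)}
    (h1 : ∀ x, α (α x) = x) (h2 : ∀ x, α x⁻¹ * x ∉ S) (h3 : ⇑α '' S⁻¹ = S)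
    (hr : ∀ i, α (r i) = r (-i)) {c : ZMod n} (hc : α (sr c) = sr c) :
    IsCayleyGraph (GC α S h1 h2 h3) := by
  have : NeZero n := ⟨hn.pos.ne'⟩
  have h2inv : (2 : ZMod n) * 2⁻¹ = 1 := by
    simpa using ZMod.coe_mul_inv_eq_one 2 (Nat.coprime_two_left.2 hn)
  have hrS : ∀ k, r k ∉ S := fun k hk => h2 (r (k * 2⁻¹)) <| by
    rw [inv_r, hr, neg_neg, r_mul_r]
    convert hk using 2
    linear_combination k * h2inv
  refine isCayleyGraph_GC_of_isComplement' h1 h2 h3 (A := zpowers (sr c)) (B := zpowers (r 1))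
    ?_ ?_ ?_
  · apply isComplement'_of_coprime <;>
      simp only [Nat.card_zpowers, orderOf_sr, orderOf_r_one, nat_card, Nat.coprime_two_left, hn]
  · rintro _ ⟨k, rfl⟩
    simp [map_zpow, hc]
  · rintro _ ⟨k, rfl⟩ (j | j)
    · exact iff_of_false (by simpa [hr] using hrS _) (hrS j)
    · simp [hr]

/-- Every generalized Cayley graph on the dihedral group `D_{2p}` of order
`2p`, `p` a prime, is a Cayley graph. -/
theorem stmt_14 (p : ℕ) (hp : p.Prime)
    (α : DihedralGroup p ≃* DihedralGroup p)
    (S : Set (DihedralGroup p))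
    (h1 : ∀ x : DihedralGroup p, α (α x) = x)
    (h2 : ∀ x : DihedralGroup p, α x⁻¹ * x ∉ S)
    (h3 : ⇑α '' S⁻¹ = S) :
    IsCayleyGraph (GC α S h1 h2 h3) := by
  have := Fact.mk hp
  obtain rfl | hp2 := eq_or_ne p 2
  · exact isCayleyGraph_GC_of_isKleinFour h1 h2 h3
  rcases DihedralGroup.mulEquiv_eq_id_or_apply_r_eq_neg hp2 α h1 with hid | ⟨hr, c, hc⟩
  · exact isCayleyGraph_GC_of_mul_mem_iff h1 h2 h3 fun x z => by simp [hid]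
  · exact isCayleyGraph_GC_dihedral_of_apply_r_eq_neg (hp.odd_of_ne_two hp2) h1 h2 h3 hr hc
end

section
/- Let p be a prime and let G be a finite group of order 2p. Then every generalized Cayley graph on G is a Cayley graph; that is, for every subset S ⊆ G and every automorphism α of G with α² = 1 such that α(x⁻¹)·x ∉ S for all x and α(S⁻¹) = S, the graph GC(G, S, α) is isomorphic to a Cayley graph Cay(H, T) for some group H and subset T with 1 ∉ T and T⁻¹ = T. -/
/-! If `α = 1`, then `GC(G, S, α) = Cay(G, S)`. Otherwise `G` has a cyclic subgroup `P` of
index 2 made of elements `α(y⁻¹) y`; such elements are inverted by `α` and avoid `S`. Choosing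
`c ∉ P` and `φ : ℤ/n ≃ P`, the bijection `r i ↦ φ i`, `sr i ↦ φ i * c` from the dihedral group
`D_n` carries a Cayley graph of `D_n` onto `GC(G, S, α)`.

For `p = 2` the group is abelian, so `y ↦ α(y⁻¹) y` is a nontrivial homomorphism and `P` can be
taken inside its image. For `p` odd, `P` is the subgroup of order `p`: `α` acts on it as `±1`, and
`+1` would force `α = 1`; when `α` inverts `P`, each element of `P` is a square
`y² = α(y⁻¹) y`. -/

open Function

section Involution

open Subgroup

variable {G : Type*} [Group G]

theorem exists_pow_sq_eq_self {x : G} (hx : Odd (orderOf x)) : ∃ m : ℕ, (x ^ m) ^ 2 = x := by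
  obtain ⟨m, hm⟩ := exists_pow_eq_self_of_coprime (Nat.coprime_two_left.2 hx)
  exact ⟨m, by rwa [← pow_mul, mul_comm, pow_mul]⟩

theorem Subgroup.mem_of_index_two_of_odd_orderOf {H : Subgroup G} (hH : H.index = 2) {x : G}
    (hx : Odd (orderOf x)) : x ∈ H := by
  obtain ⟨m, hm⟩ := exists_pow_sq_eq_self hx
  exact hm ▸ sq_mem_of_index_two hH _

theorem index_zpowers_eq_two {p : ℕ} (hp : p.Prime) (hG : Nat.card G = 2 * p) {g : G}
    (hg : orderOf g = p) : (zpowers g).index = 2 := by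
  have h := card_mul_index (zpowers g)
  rw [Nat.card_zpowers, hg, hG, mul_comm 2] at h
  exact Nat.eq_of_mul_eq_mul_left hp.pos h

variable {α : G ≃* G} (h1 : ∀ x : G, α (α x) = x)
include h1

theorem map_inv_mem_iff_of_map_eq_inv {P : Subgroup G} (hinv : ∀ x ∈ P, α x = x⁻¹)
    (x : G) : α x⁻¹ ∈ P ↔ x ∈ P := by
  refine ⟨fun h => ?_, fun h => by rwa [hinv _ (inv_mem h), inv_inv]⟩
  have := hinv _ h
  rw [h1, inv_inj] at this
  exact this ▸ h

theorem forall_apply_eq_of_forall_mem_apply_eq {P : Subgroup G} (hP : P.index = 2)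
    (hodd : Odd (Nat.card P)) (hfix : ∀ x ∈ P, α x = x) (t : G) : α t = t := by
  by_cases ht : t ∈ P
  · exact hfix t ht
  have hαt : α t ∉ P := fun h => ht (by rw [← h1 t, hfix _ h]; exact h)
  set u := α t * t⁻¹
  have hu : u ∈ P := (mul_mem_iff_of_index_two hP).2 (iff_of_false hαt (inv_mem_iff.not.2 ht))
  have hu2 : u ^ 2 = 1 := by
    have : α u = u⁻¹ := by simp only [u, map_mul, map_inv, h1, mul_inv_rev, inv_inv]
    rw [hfix u hu, eq_inv_iff_mul_eq_one] at this
    rw [sq, this]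
  obtain ⟨m, hm⟩ := exists_pow_sq_eq_self (hodd.of_dvd_nat (P.orderOf_dvd_natCard hu))
  rwa [← pow_mul, mul_comm, pow_mul, hu2, one_pow, eq_comm, mul_inv_eq_one] at hm

theorem forall_mem_apply_eq_or_eq_inv {P : Subgroup G} (hP : (Nat.card P).Prime)
    (hαP : ∀ x ∈ P, α x ∈ P) : (∀ x ∈ P, α x = x) ∨ ∀ x ∈ P, α x = x⁻¹ := by
  by_cases h : ∀ x ∈ P, α x * x = 1
  · exact .inr fun x hx => eq_inv_of_mul_eq_one_left (h x hx)
  push Not at h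
  obtain ⟨x, hx, hy1⟩ := h
  set y := α x * x
  have hy : y ∈ P := mul_mem (hαP x hx) hx
  have hαy : α y = y := by
    have : IsCyclic P := isCyclic_of_prime_card (hp := ⟨hP⟩) rfl
    simpa only [y, map_mul, h1] using setLike_mul_comm hx (hαP x hx)
  have : Finite P := Nat.finite_of_card_ne_zero hP.ne_zero
  have hPy : zpowers y = P := by
    refine eq_of_le_of_card_ge (zpowers_le.2 hy) ?_
    rw [Nat.card_zpowers]
    rcases hP.eq_one_or_self_of_dvd _ (P.orderOf_dvd_natCard hy) with h | h
    · exact absurd (orderOf_eq_one_iff.1 h) hy1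
    · exact h.ge
  refine .inl fun z hz => ?_
  obtain ⟨k, rfl⟩ := mem_zpowers_iff.1 (hPy ▸ hz)
  rw [map_zpow, hαy]

end Involution

section OrderTwoP

open Subgroup

variable {G : Type*} [Group G] {α : G ≃* G}

theorem exists_orderOf_eq_two_zpowers_subset_range (hG : Nat.card G = 2 ^ 2)
    (hα : ∃ x, α x ≠ x) :
    ∃ g : G, orderOf g = 2 ∧ (zpowers g : Set G) ⊆ Set.range fun y => α y⁻¹ * y := by
  have : Fact (Nat.Prime 2) := ⟨Nat.prime_two⟩
  have hcomm : ∀ a b : G, a * b = b * a :=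
    (IsPGroup.isMulCommutative_of_card_eq_prime_sq hG).is_comm.comm
  let q : G →* G := MonoidHom.mk' (fun y => α y⁻¹ * y) fun a b => by
    rw [mul_inv_rev, map_mul, hcomm (α b⁻¹), mul_assoc, mul_assoc, ← mul_assoc (α b⁻¹),
      hcomm (α b⁻¹) a, mul_assoc]
  have hq : q.range ≠ ⊥ := by
    obtain ⟨x, hx⟩ := hα
    refine fun h => hx ?_
    simpa [q, mul_eq_one_iff_eq_inv] using
      DFunLike.congr_fun (MonoidHom.range_eq_bot_iff.1 h) x⁻¹
  have : Finite G := Nat.finite_of_card_ne_zero (by rw [hG]; norm_num)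
  obtain ⟨k, -, hcard⟩ :=
    (Nat.dvd_prime_pow Nat.prime_two).1 (hG ▸ card_subgroup_dvd_card q.range)
  have hk0 : k ≠ 0 := by rintro rfl; exact hq (card_eq_one.1 hcard)
  obtain ⟨⟨g, hgq⟩, hg⟩ := exists_prime_orderOf_dvd_card' 2 (hcard ▸ dvd_pow_self 2 hk0)
  exact ⟨g, by rwa [orderOf_mk] at hg, zpowers_le.2 hgq⟩

theorem exists_orderOf_eq_zpowers_subset_range_of_odd (h1 : ∀ x : G, α (α x) = x) {p : ℕ}
    (hp : p.Prime) (hodd : Odd p) (hG : Nat.card G = 2 * p) (hα : ∃ x, α x ≠ x) :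
    ∃ g : G, orderOf g = p ∧ (zpowers g : Set G) ⊆ Set.range fun y => α y⁻¹ * y := by
  have : Fact p.Prime := ⟨hp⟩
  have : Finite G := Nat.finite_of_card_ne_zero (hG ▸ mul_ne_zero two_ne_zero hp.ne_zero)
  obtain ⟨g, hg⟩ := exists_prime_orderOf_dvd_card' p (hG ▸ dvd_mul_left p 2)
  have hP := index_zpowers_eq_two hp hG hg
  have hcard : Nat.card (zpowers g) = p := by rw [Nat.card_zpowers, hg]
  have hαg : α g ∈ zpowers g :=
    mem_of_index_two_of_odd_orderOf hP (by rwa [MulEquiv.orderOf_eq, hg])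
  have hαP : ∀ x ∈ zpowers g, α x ∈ zpowers g := by
    rintro _ ⟨k, rfl⟩
    simpa only [map_zpow] using zpow_mem hαg k
  rcases forall_mem_apply_eq_or_eq_inv h1 (hcard ▸ hp) hαP with hfix | hinv
  · obtain ⟨x, hx⟩ := hα
    exact absurd (forall_apply_eq_of_forall_mem_apply_eq h1 hP (hcard ▸ hodd) hfix x) hx
  refine ⟨g, hg, fun x hx => ?_⟩
  obtain ⟨m, hm⟩ := exists_pow_sq_eq_self (hodd.of_dvd_nat (hcard ▸ orderOf_dvd_natCard _ hx))
  exact ⟨x ^ m, by dsimp only; rw [map_inv, hinv _ (pow_mem hx m), inv_inv, ← sq, hm]⟩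

end OrderTwoP

theorem Cay.isCayleyGraph {H : Type*} [Group H] [Small.{0} H] (T : Set H) (hT1 : (1 : H) ∉ T)
    (hT2 : T⁻¹ = T) : IsCayleyGraph (Cay T hT1 hT2) := by
  let e : Shrink.{0} H ≃* H := Shrink.mulEquiv
  have hinv : (e ⁻¹' T)⁻¹ = e ⁻¹' T := by
    ext z
    simp only [Set.mem_inv, Set.mem_preimage, map_inv]
    rw [← Set.mem_inv, hT2]
  refine ⟨⟨Shrink.{0} H, e ⁻¹' T, by simpa using hT1, hinv,
    ⟨⟨e.toEquiv.symm, ?_⟩⟩⟩⟩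
  intro x y
  change e ((e.symm x)⁻¹ * e.symm y) ∈ T ↔ x⁻¹ * y ∈ T
  simp

theorem GC.isCayleyGraph_of_forall_apply_eq {G : Type*} [Group G] [Small.{0} G] (α : G ≃* G)
    (S : Set G) (h1 : ∀ x : G, α (α x) = x) (h2 : ∀ x : G, α x⁻¹ * x ∉ S)
    (h3 : ⇑α '' S⁻¹ = S) (hα : ∀ x, α x = x) : IsCayleyGraph (GC α S h1 h2 h3) := by
  have hS1 : (1 : G) ∉ S := by simpa using h2 1
  have hS2 : S⁻¹ = S := by simpa [show ⇑α = id from funext hα] using h3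
  convert Cay.isCayleyGraph S hS1 hS2 using 2
  ext x y
  change α x⁻¹ * y ∈ S ↔ x⁻¹ * y ∈ S
  rw [hα]

section DihedralModel

variable {G : Type*} [Group G] {n : ℕ}

def dihedralCosetMap (φ : Multiplicative (ZMod n) →* G) (c : G) : DihedralGroup n → G
  | .r i => φ (.ofAdd i)
  | .sr i => φ (.ofAdd i) * c

variable {φ : Multiplicative (ZMod n) →* G} {c : G}

theorem dihedralCosetMap_bijective (hφ : Injective φ) (hc : c ∉ φ.range)
    (hP : φ.range.index = 2) : Bijective (dihedralCosetMap φ c) := by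
  constructor
  · rintro (i | i) (j | j) h <;> simp only [dihedralCosetMap] at h
    · rw [Multiplicative.ofAdd.injective (hφ h)]
    · exact absurd ⟨(.ofAdd j)⁻¹ * .ofAdd i, by simp [h]⟩ hc
    · exact absurd ⟨(.ofAdd i)⁻¹ * .ofAdd j, by simp [← h]⟩ hc
    · rw [Multiplicative.ofAdd.injective (hφ (mul_right_cancel h))]
  · intro x
    by_cases hx : x ∈ φ.range
    · obtain ⟨i, rfl⟩ := hx
      exact ⟨.r i.toAdd, rfl⟩
    · obtain ⟨i, hi⟩ : x * c⁻¹ ∈ φ.range :=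
        (Subgroup.mul_mem_iff_of_index_two hP).2 (iff_of_false hx (inv_mem_iff.not.2 hc))
      exact ⟨.sr i.toAdd, by simp [dihedralCosetMap, hi]⟩

end DihedralModel

section GCModel

open DihedralGroup

variable {G : Type*} [Group G] {n : ℕ} {φ : Multiplicative (ZMod n) →* G} {c : G}
  (α : G ≃* G) (S : Set G) (h1 : ∀ x : G, α (α x) = x) (h2 : ∀ x : G, α x⁻¹ * x ∉ S)
  (h3 : ⇑α '' S⁻¹ = S)

theorem GC.adj_dihedralCosetMap_iff (hP : φ.range.index = 2)
    (hinv : ∀ x ∈ φ.range, α x = x⁻¹) (hS : ∀ x ∈ φ.range, x ∉ S) (z w : DihedralGroup n) :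
    (GC α S h1 h2 h3).Adj (dihedralCosetMap φ c z) (dihedralCosetMap φ c w) ↔
      dihedralCosetMap φ c (z⁻¹ * w) ∈ S := by
  set β := dihedralCosetMap φ c
  have hr : ∀ i, β (r i) ∈ φ.range := fun i => ⟨_, rfl⟩
  have hsame : ∀ z w, (β z ∈ φ.range ↔ β w ∈ φ.range) → α (β z)⁻¹ * β w ∈ φ.range :=
    fun z w h => (Subgroup.mul_mem_iff_of_index_two hP).2
      ((map_inv_mem_iff_of_map_eq_inv h1 hinv _).trans h)
  have hmixed : ∀ i j, α (β (r i))⁻¹ * β (sr j) = β ((r i)⁻¹ * sr j) := by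
    intro i j
    simp only [β, dihedralCosetMap, inv_r, r_mul_sr, sub_neg_eq_add, map_inv, hinv _ ⟨_, rfl⟩,
      inv_inv]
    rw [add_comm, ofAdd_add, map_mul, mul_assoc]
  rcases z with i | i <;> rcases w with j | j
  · rw [inv_r, r_mul_r]
    exact iff_of_false (hS _ (hsame _ _ (iff_of_true (hr i) (hr j)))) (hS _ (hr _))
  · exact iff_of_eq (congrArg (· ∈ S) (hmixed i j))
  · rw [SimpleGraph.adj_comm]
    change α (β (r j))⁻¹ * β (sr i) ∈ S ↔ _
    rw [hmixed, inv_r, r_mul_sr, inv_sr, sr_mul_r, sub_neg_eq_add, add_comm]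
  · rw [inv_sr, sr_mul_sr]
    have hside : β (sr i) ∈ φ.range ↔ β (sr j) ∈ φ.range :=
      (Subgroup.mul_mem_cancel_left _ (hr i)).trans (Subgroup.mul_mem_cancel_left _ (hr j)).symm
    exact iff_of_false (hS _ (hsame _ _ hside)) (hS _ (hr _))

end GCModel

theorem GC.isCayleyGraph_of_index_two {G : Type*} [Group G] (α : G ≃* G) (S : Set G)
    (h1 : ∀ x : G, α (α x) = x) (h2 : ∀ x : G, α x⁻¹ * x ∉ S) (h3 : ⇑α '' S⁻¹ = S)
    (P : Subgroup G) [hPc : IsCyclic P] (hP : P.index = 2) (hinv : ∀ x ∈ P, α x = x⁻¹)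
    (hS : ∀ x ∈ P, x ∉ S) : IsCayleyGraph (GC α S h1 h2 h3) := by
  set φ := P.subtype.comp (zmodCyclicMulEquiv hPc).toMonoidHom
  have hφ : Injective φ := Subtype.val_injective.comp (MulEquiv.injective _)
  have hφP : φ.range = P := by
    rw [MonoidHom.range_comp, MonoidHom.range_eq_top.2 (MulEquiv.surjective _),
      ← MonoidHom.range_eq_map, Subgroup.range_subtype]
  obtain ⟨c, hc⟩ : ∃ c, c ∉ P := by
    by_contra! h
    simp [(Subgroup.eq_top_iff' P).2 h] at hP
  rw [← hφP] at hP hinv hS hc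
  set β := dihedralCosetMap φ c
  have hadj := GC.adj_dihedralCosetMap_iff α S h1 h2 h3 hP hinv hS (c := c)
  have hβ1 : β 1 ∉ S := hS _ ⟨_, rfl⟩
  have hinvS : (β ⁻¹' S)⁻¹ = β ⁻¹' S := by
    ext z
    simpa [hadj] using ((hadj z 1).symm.trans ((GC α S h1 h2 h3).adj_comm _ _)).trans (hadj 1 z)
  exact ⟨⟨DihedralGroup (Nat.card P), β ⁻¹' S, hβ1, hinvS,
    ⟨(⟨Equiv.ofBijective β (dihedralCosetMap_bijective hφ hc hP), hadj _ _⟩ :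
      Cay _ hβ1 hinvS ≃g GC α S h1 h2 h3).symm⟩⟩⟩

/-- Every generalized Cayley graph on a group of order `2p`, `p` a prime,
is a Cayley graph. -/
theorem stmt_15 (p : ℕ) (hp : p.Prime) {G : Type*} [Group G] [Fintype G]
    (hG : Fintype.card G = 2 * p)
    (α : G ≃* G) (S : Set G)
    (h1 : ∀ x : G, α (α x) = x)
    (h2 : ∀ x : G, α x⁻¹ * x ∉ S)
    (h3 : ⇑α '' S⁻¹ = S) :
    IsCayleyGraph (GC α S h1 h2 h3) := by
  rw [← Nat.card_eq_fintype_card] at hG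
  by_cases hα : ∀ x, α x = x
  · exact GC.isCayleyGraph_of_forall_apply_eq α S h1 h2 h3 hα
  push Not at hα
  obtain ⟨g, hg, hgQ⟩ : ∃ g : G, orderOf g = p ∧
      (Subgroup.zpowers g : Set G) ⊆ Set.range fun y => α y⁻¹ * y := by
    rcases hp.eq_two_or_odd' with rfl | hodd
    · exact exists_orderOf_eq_two_zpowers_subset_range hG hα
    · exact exists_orderOf_eq_zpowers_subset_range_of_odd h1 hp hodd hG hα
  refine GC.isCayleyGraph_of_index_two α S h1 h2 h3 _ (index_zpowers_eq_two hp hG hg)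
    (fun x hx => ?_) fun x hx => ?_
  · obtain ⟨y, rfl⟩ := hgQ hx
    simp only [map_mul, map_inv, h1, mul_inv_rev, inv_inv]
  · obtain ⟨y, rfl⟩ := hgQ hx
    exact h2 y
end

section
/- Let X = GC(G, S, α) be a generalized Cayley graph and let K = {g ∈ G : α(g)·S = S}. Then adjacency in X depends only on the left cosets modulo K: for all x, y ∈ G and all k₁, k₂ ∈ K, the vertices x and y are adjacent in X if and only if x·k₁ and y·k₂ are adjacent in X. (Consequently X is isomorphic to the lexicographic product of its quotient graph X_K over the left cosets of K with the empty graph on |K| vertices.) -/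
theorem inv_mul_mem_iff_of_image_mul_left_eq {G : Type*} [Group G] {S : Set G} {g : G}
    (h : (fun s => g * s) '' S = S) (t : G) : g⁻¹ * t ∈ S ↔ t ∈ S := by
  conv_rhs => rw [← h, Set.image_mul_left]
  rfl

namespace GC

variable {G : Type*} [Group G] {α : G ≃* G} {S : Set G} {h1 : ∀ x : G, α (α x) = x}
  {h2 : ∀ x : G, α x⁻¹ * x ∉ S} {h3 : ⇑α '' S⁻¹ = S}

theorem mul_adj_iff {k : G} (hk : (fun s => α k * s) '' S = S) (x y : G) :
    (GC α S h1 h2 h3).Adj (x * k) y ↔ (GC α S h1 h2 h3).Adj x y := by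
  change α (x * k)⁻¹ * y ∈ S ↔ α x⁻¹ * y ∈ S
  rw [mul_inv_rev, map_mul, map_inv, mul_assoc]
  exact inv_mul_mem_iff_of_image_mul_left_eq hk _

end GC

/-- In a generalized Cayley graph `X = GC(G, S, α)`, adjacency depends only
on the left cosets modulo `K = {g ∈ G : α(g)·S = S}`: for `k₁, k₂ ∈ K`, the vertices `x`
and `y` are adjacent iff `x·k₁` and `y·k₂` are adjacent. -/
theorem stmt_18 {G : Type*} [Group G] (α : G ≃* G) (S : Set G)
    (h1 : ∀ x : G, α (α x) = x)
    (h2 : ∀ x : G, α x⁻¹ * x ∉ S)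
    (h3 : ⇑α '' S⁻¹ = S) :
    ∀ x y k₁ k₂ : G, k₁ ∈ {g : G | (fun s => α g * s) '' S = S} →
      k₂ ∈ {g : G | (fun s => α g * s) '' S = S} →
      ((GC α S h1 h2 h3).Adj x y ↔ (GC α S h1 h2 h3).Adj (x * k₁) (y * k₂)) := by
  intro x y k₁ k₂ hk₁ hk₂
  -- symmetry of adjacency moves `k₂` onto the first vertex, where `GC.mul_adj_iff` applies
  rw [GC.mul_adj_iff hk₁, SimpleGraph.adj_comm _ x (y * k₂), GC.mul_adj_iff hk₂,
    SimpleGraph.adj_comm]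
end
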